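/- Fix an integer η ≥ 2 and P̂max > 0. With f as in the bisection design, lim_{υ → ((η²+3η−2)/(2(η−1)))⁺} f(υ) = +∞. -/

import Mathlib

noncomputable def uhatF (η υ : ℝ) : ℝ := υ / η + η / 2 + 3 / 2 - 1 / η

noncomputable def zetaF (η Pmax υ : ℝ) : ℝ :=
  (η - 1) * (υ + η / 2 - 1) / (η * υ * (υ - uhatF η υ)) *
    (Pmax - η * (υ - uhatF η υ) ^ 2 / (2 * (η - 1) * (υ + η / 2 - 1)))

noncomputable def fF (η Pmax υ : ℝ) : ℝ :=
  -((υ - uhatF η υ) / (υ * (1 + zetaF η Pmax υ))) *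
      (((η - 1) * (υ + η / 2 - 1) + 2 * η) / (2 * η))
    - (η - 1) * (υ + η / 2 - 1) / (η * (1 + zetaF η Pmax υ)) * zetaF η Pmax υ
    + η * Real.log (1 + zetaF η Pmax υ)
    + (η / 2 + 1) * Real.log (υ / uhatF η υ)

theorem f_tendsto_atTop
    (η : ℕ) (hη : 2 ≤ η) (Pmax : ℝ) (hP : 0 < Pmax) :
    Filter.Tendsto (fF (η : ℝ) Pmax)
      (nhdsWithin (((η : ℝ) ^ 2 + 3 * η - 2) / (2 * ((η : ℝ) - 1)))
        (Set.Ioi (((η : ℝ) ^ 2 + 3 * η - 2) / (2 * ((η : ℝ) - 1)))))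
      Filter.atTop := by
  have hη2 : (2 : ℝ) ≤ (η : ℝ) := by exact_mod_cast hη
  set e : ℝ := (η : ℝ) with he
  have he0 : (0:ℝ) < e := by linarith
  have hene : e ≠ 0 := ne_of_gt he0
  have hem1 : (0:ℝ) < e - 1 := by linarith
  have hem1ne : e - 1 ≠ 0 := ne_of_gt hem1
  set v0 : ℝ := (e ^ 2 + 3 * e - 2) / (2 * (e - 1)) with hv0
  set l := nhdsWithin v0 (Set.Ioi v0) with hl
  have hv0pos : 0 < v0 := by
    apply div_pos
    · nlinarith
    · linarith
  -- key identity for υ - û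
  have hg : ∀ υ : ℝ, υ - uhatF e υ = (e - 1) / e * (υ - v0) := by
    intro υ
    unfold uhatF
    rw [hv0]
    field_simp
    ring
  have hgv0 : v0 - uhatF e v0 = 0 := by rw [hg]; ring
  have huv0 : uhatF e v0 = v0 := by linarith [hgv0]
  have huv0ne : uhatF e v0 ≠ 0 := by rw [huv0]; exact ne_of_gt hv0pos
  have hid : Filter.Tendsto (fun υ : ℝ => υ) l (nhds v0) :=
    Filter.tendsto_id.mono_left nhdsWithin_le_nhds
  -- g tends to 0 within Ioi 0
  have hg0 : Filter.Tendsto (fun υ : ℝ => υ - uhatF e υ) l (nhds 0) := by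
    have : Filter.Tendsto (fun υ : ℝ => (e - 1) / e * (υ - v0)) l
        (nhds ((e - 1) / e * (v0 - v0))) :=
      ((hid.sub_const v0).const_mul _)
    simp only [sub_self, mul_zero] at this
    exact this.congr (fun υ => (hg υ).symm)
  have hgpos : ∀ᶠ υ in l, υ - uhatF e υ ∈ Set.Ioi (0:ℝ) := by
    filter_upwards [self_mem_nhdsWithin] with υ hυ
    rw [hg]
    exact Set.mem_Ioi.2 (mul_pos (div_pos hem1 he0) (sub_pos.2 hυ))
  have hgIoi : Filter.Tendsto (fun υ : ℝ => υ - uhatF e υ) l (nhdsWithin 0 (Set.Ioi 0)) :=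
    tendsto_nhdsWithin_iff.2 ⟨hg0, hgpos⟩
  have hginv : Filter.Tendsto (fun υ : ℝ => (υ - uhatF e υ)⁻¹) l Filter.atTop :=
    tendsto_inv_nhdsGT_zero.comp hgIoi
  -- a(υ) = (e-1)*(υ+e/2-1)
  have ta : Filter.Tendsto (fun υ : ℝ => (e - 1) * (υ + e / 2 - 1)) l
      (nhds ((e - 1) * (v0 + e / 2 - 1))) :=
    ((hid.add_const (e / 2)).sub_const 1).const_mul _
  have ha0pos : 0 < (e - 1) * (v0 + e / 2 - 1) := by
    apply mul_pos hem1; nlinarith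
  -- h = a/(e υ) * (Pmax - e g^2 / (2(e-1)(υ+e/2-1)))
  have th1 : Filter.Tendsto (fun υ : ℝ => (e - 1) * (υ + e / 2 - 1) / (e * υ)) l
      (nhds ((e - 1) * (v0 + e / 2 - 1) / (e * v0))) :=
    ta.div (hid.const_mul e) (by positivity)
  have th2 : Filter.Tendsto
      (fun υ : ℝ => Pmax - e * (υ - uhatF e υ) ^ 2 / (2 * (e - 1) * (υ + e / 2 - 1))) l
      (nhds Pmax) := by
    have hnum : Filter.Tendsto (fun υ : ℝ => e * (υ - uhatF e υ) ^ 2) l (nhds (e * 0 ^ 2)) :=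
      (hg0.pow 2).const_mul e
    have hden : Filter.Tendsto (fun υ : ℝ => 2 * (e - 1) * (υ + e / 2 - 1)) l
        (nhds (2 * (e - 1) * (v0 + e / 2 - 1))) :=
      ((hid.add_const (e / 2)).sub_const 1).const_mul _
    have hdne : 2 * (e - 1) * (v0 + e / 2 - 1) ≠ 0 := by
      have : 0 < v0 + e / 2 - 1 := by nlinarith
      positivity
    have h2 : Filter.Tendsto
        (fun υ : ℝ => Pmax - e * (υ - uhatF e υ) ^ 2 / (2 * (e - 1) * (υ + e / 2 - 1))) l
        (nhds (Pmax - e * (0:ℝ) ^ 2 / (2 * (e - 1) * (v0 + e / 2 - 1)))) :=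
      Filter.Tendsto.sub tendsto_const_nhds (hnum.div hden hdne)
    simpa using h2
  have hh : Filter.Tendsto
      (fun υ : ℝ => (e - 1) * (υ + e / 2 - 1) / (e * υ) *
        (Pmax - e * (υ - uhatF e υ) ^ 2 / (2 * (e - 1) * (υ + e / 2 - 1)))) l
      (nhds ((e - 1) * (v0 + e / 2 - 1) / (e * v0) * Pmax)) := th1.mul th2
  have hh0pos : 0 < (e - 1) * (v0 + e / 2 - 1) / (e * v0) * Pmax := by
    apply mul_pos _ hP
    apply div_pos ha0pos (by positivity)
  -- ζ → atTop
  have hzeq : ∀ υ : ℝ, ((e - 1) * (υ + e / 2 - 1) / (e * υ) *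
        (Pmax - e * (υ - uhatF e υ) ^ 2 / (2 * (e - 1) * (υ + e / 2 - 1)))) *
        (υ - uhatF e υ)⁻¹ = zetaF e Pmax υ := by
    intro υ
    unfold zetaF
    generalize υ - uhatF e υ = G
    ring
  have hztop : Filter.Tendsto (zetaF e Pmax) l Filter.atTop :=
    (Filter.Tendsto.pos_mul_atTop hh0pos hh hginv).congr hzeq
  have h1z : Filter.Tendsto (fun υ : ℝ => 1 + zetaF e Pmax υ) l Filter.atTop :=
    Filter.tendsto_atTop_add_const_left l 1 hztop
  -- log term → atTop
  have hC : Filter.Tendsto (fun υ : ℝ => e * Real.log (1 + zetaF e Pmax υ)) l Filter.atTop :=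
    (Real.tendsto_log_atTop.comp h1z).const_mul_atTop he0
  -- first term → 0
  have hυζ : Filter.Tendsto (fun υ : ℝ => υ * (1 + zetaF e Pmax υ)) l Filter.atTop :=
    Filter.Tendsto.pos_mul_atTop hv0pos hid h1z
  have hfrac : Filter.Tendsto (fun υ : ℝ => (υ - uhatF e υ) / (υ * (1 + zetaF e Pmax υ))) l
      (nhds 0) := hg0.div_atTop hυζ
  have hK : Filter.Tendsto (fun υ : ℝ => ((e - 1) * (υ + e / 2 - 1) + 2 * e) / (2 * e)) l
      (nhds (((e - 1) * (v0 + e / 2 - 1) + 2 * e) / (2 * e))) :=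
    (ta.add_const (2 * e)).div_const (2 * e)
  have hA : Filter.Tendsto
      (fun υ : ℝ => -((υ - uhatF e υ) / (υ * (1 + zetaF e Pmax υ))) *
        (((e - 1) * (υ + e / 2 - 1) + 2 * e) / (2 * e))) l
      (nhds (-0 * (((e - 1) * (v0 + e / 2 - 1) + 2 * e) / (2 * e)))) :=
    hfrac.neg.mul hK
  -- second term
  have hinv0 : Filter.Tendsto (fun υ : ℝ => (1 + zetaF e Pmax υ)⁻¹) l (nhds 0) :=
    h1z.inv_tendsto_atTop
  have hT2' : Filter.Tendsto
      (fun υ : ℝ => (e - 1) * (υ + e / 2 - 1) / e * (1 - (1 + zetaF e Pmax υ)⁻¹)) l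
      (nhds ((e - 1) * (v0 + e / 2 - 1) / e * (1 - 0))) :=
    (ta.div_const e).mul (tendsto_const_nhds.sub hinv0)
  have hT2eq : ∀ᶠ υ in l,
      (e - 1) * (υ + e / 2 - 1) / e * (1 - (1 + zetaF e Pmax υ)⁻¹) =
      (e - 1) * (υ + e / 2 - 1) / (e * (1 + zetaF e Pmax υ)) * zetaF e Pmax υ := by
    filter_upwards [h1z.eventually (Filter.eventually_gt_atTop 0)] with υ hw
    have hwne : 1 + zetaF e Pmax υ ≠ 0 := ne_of_gt hw
    have h1 : (1:ℝ) - (1 + zetaF e Pmax υ)⁻¹ =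
        zetaF e Pmax υ * (1 + zetaF e Pmax υ)⁻¹ := by
      field_simp
      ring
    rw [h1, ← div_div]
    ring
  have hT2 : Filter.Tendsto
      (fun υ : ℝ => (e - 1) * (υ + e / 2 - 1) / (e * (1 + zetaF e Pmax υ)) * zetaF e Pmax υ) l
      (nhds ((e - 1) * (v0 + e / 2 - 1) / e * (1 - 0))) :=
    hT2'.congr' hT2eq
  have hAB := hA.sub hT2
  -- last term → 0
  have hu : Filter.Tendsto (fun υ : ℝ => uhatF e υ) l (nhds (uhatF e v0)) := by
    unfold uhatF
    exact (((hid.div_const e).add_const (e / 2)).add_const (3 / 2)).sub_const (1 / e)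
  have hdiv1 : Filter.Tendsto (fun υ : ℝ => υ / uhatF e υ) l (nhds 1) := by
    have := hid.div hu huv0ne
    rwa [huv0, div_self (ne_of_gt hv0pos)] at this
  have hlog1 : Filter.Tendsto (fun υ : ℝ => Real.log (υ / uhatF e υ)) l (nhds 0) := by
    have := (Real.continuousAt_log one_ne_zero).tendsto.comp hdiv1
    simpa [Function.comp_def] using this
  have hD : Filter.Tendsto (fun υ : ℝ => (e / 2 + 1) * Real.log (υ / uhatF e υ)) l
      (nhds ((e / 2 + 1) * 0)) := hlog1.const_mul _
  -- assemble
  show Filter.Tendsto (fF e Pmax) l Filter.atTop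
  exact ((hAB.add_atTop hC).atTop_add hD : _)
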